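/- arXiv:2503.06415 — 5 statements merged into one kernel-verified Lean document; each statement's English description precedes it below -/
import Mathlib

section
/- The squared L² turning distance between the regular n-gon and the regular k-gon (n, k ≥ 2), defined as D₂(R_n,R_k) = (1/π²)(∫₀¹ (f_n − f_k)² ds − (∫₀¹ (f_n − f_k) ds)²), satisfies D₂(R_n,R_k) = −(1/n − 1/k)² + (4/(nk)) Σ_{i=0}^{nk}( (1/k)⌊i/n⌋ − (1/n)⌊i/k⌋ )². -/
open MeasureTheory Real Finset

/-- Turning function of the unit-perimeter regular `m`-gon. -/
noncomputable def turnFun (m : ℕ) (s : ℝ) : ℝ := (2 * π / m) * (⌊(m : ℝ) * s⌋ : ℝ)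

lemma floor_piece (m q i : ℕ) (hm : 0 < m) (hq : 0 < q) {s : ℝ}
    (h1 : (i:ℝ)/((m:ℝ)*q) ≤ s) (h2 : s < ((i:ℝ)+1)/((m:ℝ)*q)) :
    ⌊(m:ℝ) * s⌋ = (i / q : ℕ) := by
  have hm' : (0:ℝ) < m := by exact_mod_cast hm
  have hq' : (0:ℝ) < q := by exact_mod_cast hq
  have hmq : (0:ℝ) < (m:ℝ)*q := mul_pos hm' hq'
  rw [Int.floor_eq_iff]
  push_cast
  constructor
  · have a1 : ((i/q : ℕ):ℝ) ≤ (i:ℝ)/q := by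
      rw [le_div_iff₀ hq']
      exact_mod_cast Nat.div_mul_le_self i q
    have a2 : (i:ℝ)/q = (m:ℝ) * ((i:ℝ)/((m:ℝ)*q)) := by field_simp
    calc ((i/q : ℕ):ℝ) ≤ (i:ℝ)/q := a1
      _ = (m:ℝ) * ((i:ℝ)/((m:ℝ)*q)) := a2
      _ ≤ (m:ℝ) * s := by exact mul_le_mul_of_nonneg_left h1 hm'.le
  · have a3 : (i:ℝ)+1 ≤ (((i/q : ℕ):ℝ)+1)*q := by
      have : i < (i/q + 1)*q := (Nat.div_lt_iff_lt_mul hq).mp (Nat.lt_succ_self _)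
      have : i + 1 ≤ (i/q + 1)*q := this
      exact_mod_cast this
    calc (m:ℝ) * s < (m:ℝ) * (((i:ℝ)+1)/((m:ℝ)*q)) := by
          exact mul_lt_mul_of_pos_left h2 hm'
      _ = ((i:ℝ)+1)/q := by field_simp
      _ ≤ ((i/q : ℕ):ℝ)+1 := by rw [div_le_iff₀ hq']; exact a3

lemma step_integral (N : ℕ) (hN : 0 < N) (f : ℝ → ℝ) (c : ℕ → ℝ)
    (hf : ∀ i, i < N → ∀ s : ℝ, (i:ℝ)/N ≤ s → s < ((i:ℝ)+1)/N → f s = c i) :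
    ∫ s in (0:ℝ)..1, f s = (∑ i ∈ Finset.range N, c i) / N := by
  have hN' : (0:ℝ) < N := by exact_mod_cast hN
  set a : ℕ → ℝ := fun i => (i:ℝ)/N with ha
  have hab : ∀ i : ℕ, a i < a (i+1) := by
    intro i
    simp only [ha]
    rw [div_lt_div_iff₀ hN' hN']
    push_cast
    nlinarith
  have hmeq : ∀ i, i < N → ∀ᵐ x : ℝ, x ∈ Set.uIoc (a i) (a (i+1)) → f x = c i := by
    intro i hi
    have hx : ∀ᵐ x : ℝ, x ≠ a (i+1) := by
      simp [ae_iff, Real.volume_singleton]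
    filter_upwards [hx] with x hx hmem
    rw [Set.uIoc_of_le (hab i).le] at hmem
    have hlt : x < a (i+1) := lt_of_le_of_ne hmem.2 hx
    refine hf i hi x hmem.1.le ?_
    have : a (i+1) = ((i:ℝ)+1)/N := by simp only [ha]; push_cast; ring
    rwa [this] at hlt
  have hint : ∀ i, i < N → IntervalIntegrable f volume (a i) (a (i+1)) := by
    intro i hi
    rw [intervalIntegrable_iff_integrableOn_Ioc_of_le (hab i).le]
    refine ((integrableOn_const_iff (C := c i)).mpr (Or.inr measure_Ioc_lt_top)).congr ?_
    refine Filter.EventuallyEq.symm ?_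
    rw [Filter.EventuallyEq, MeasureTheory.ae_restrict_iff' measurableSet_Ioc]
    filter_upwards [hmeq i hi] with x hx hxm
    exact hx (by rwa [Set.uIoc_of_le (hab i).le])
  have hsum := intervalIntegral.sum_integral_adjacent_intervals hint
  have key : ∀ i ∈ Finset.range N, (∫ x in a i..a (i+1), f x) = c i / N := by
    intro i hi
    rw [intervalIntegral.integral_congr_ae (g := fun _ => c i) (hmeq i (Finset.mem_range.mp hi))]
    rw [intervalIntegral.integral_const, smul_eq_mul]
    have : a (i+1) - a i = 1/N := by
      simp only [ha]; push_cast; rw [div_sub_div_same]; ring_nf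
    rw [this]; ring
  calc ∫ s in (0:ℝ)..1, f s = ∫ x in (a 0)..(a N), f x := by
        simp [ha, div_self hN'.ne']
    _ = ∑ i ∈ Finset.range N, ∫ x in a i..a (i+1), f x := hsum.symm
    _ = ∑ i ∈ Finset.range N, c i / N := Finset.sum_congr rfl key
    _ = (∑ i ∈ Finset.range N, c i) / N := by rw [Finset.sum_div]

lemma sum_div_cast (q : ℕ) (hq : 0 < q) :
    ∀ n : ℕ, (∑ i ∈ Finset.range (n*q), ((i / q : ℕ) : ℝ)) = q * n * (n-1) / 2 := by
  intro n
  induction n with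
  | zero => simp
  | succ n ih =>
    have hsplit : (n+1)*q = n*q + q := by ring
    rw [hsplit, Finset.range_eq_Ico,
      ← Finset.sum_Ico_consecutive _ (Nat.zero_le (n*q)) (Nat.le_add_right _ q),
      ← Finset.range_eq_Ico, ih, Finset.sum_Ico_eq_sum_range]
    have : ∀ j ∈ Finset.range ((n*q + q) - n*q), (((n*q + j) / q : ℕ) : ℝ) = (n : ℕ) := by
      intro j hj
      rw [Nat.add_sub_cancel_left] at hj
      have hj' : j < q := Finset.mem_range.mp hj
      congr 1
      rw [add_comm, Nat.add_mul_div_right _ _ hq, Nat.div_eq_of_lt hj', zero_add]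
    rw [Finset.sum_congr rfl this, Nat.add_sub_cancel_left, Finset.sum_const,
      Finset.card_range, nsmul_eq_mul]
    push_cast
    ring

theorem D2_regular_polygons (n k : ℕ) (hn : 2 ≤ n) (hk : 2 ≤ k) :
    (1 / π ^ 2) * ((∫ s in (0:ℝ)..1, (turnFun n s - turnFun k s) ^ 2)
        - (∫ s in (0:ℝ)..1, (turnFun n s - turnFun k s)) ^ 2)
      = -(1 / (n : ℝ) - 1 / (k : ℝ)) ^ 2 +
        (4 / ((n : ℝ) * k)) *
          ∑ i ∈ Finset.range (n * k + 1),
            ((1 / (k : ℝ)) * (i / n : ℕ) - (1 / (n : ℝ)) * (i / k : ℕ)) ^ 2 := by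
  have hn0 : 0 < n := lt_of_lt_of_le (by norm_num) hn
  have hk0 : 0 < k := lt_of_lt_of_le (by norm_num) hk
  have hN : 0 < n * k := Nat.mul_pos hn0 hk0
  have hn' : (0:ℝ) < n := by exact_mod_cast hn0
  have hk' : (0:ℝ) < k := by exact_mod_cast hk0
  have hπ : (0:ℝ) < π := Real.pi_pos
  have hNcast : ((n*k : ℕ):ℝ) = (n:ℝ)*k := by push_cast; ring
  set c : ℕ → ℝ := fun i => 2*π/n * ((i/k : ℕ):ℝ) - 2*π/k * ((i/n : ℕ):ℝ) with hc
  have hstep : ∀ i, i < n*k → ∀ s : ℝ, (i:ℝ)/((n*k : ℕ):ℝ) ≤ s →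
      s < ((i:ℝ)+1)/((n*k : ℕ):ℝ) → turnFun n s - turnFun k s = c i := by
    intro i hi s hs1 hs2
    rw [hNcast] at hs1 hs2
    have e1 : ⌊(n:ℝ)*s⌋ = (i/k : ℕ) := floor_piece n k i hn0 hk0 hs1 hs2
    have e2 : ⌊(k:ℝ)*s⌋ = (i/n : ℕ) := floor_piece k n i hk0 hn0
      (by rwa [mul_comm (k:ℝ) (n:ℝ)]) (by rwa [mul_comm (k:ℝ) (n:ℝ)])
    simp only [turnFun, hc]
    rw [e1, e2]
    simp only [Int.cast_natCast]
  have I1 := step_integral (n*k) hN (fun s => turnFun n s - turnFun k s) c hstep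
  have I2 := step_integral (n*k) hN (fun s => (turnFun n s - turnFun k s)^2)
    (fun i => (c i)^2) (by
      intro i hi s h1 h2
      show (turnFun n s - turnFun k s)^2 = (c i)^2
      rw [hstep i hi s h1 h2])
  have hA : ∑ i ∈ Finset.range (n*k), ((i/k : ℕ):ℝ) = k * n * ((n:ℝ)-1)/2 :=
    sum_div_cast k hk0 n
  have hB : ∑ i ∈ Finset.range (n*k), ((i/n : ℕ):ℝ) = n * k * ((k:ℝ)-1)/2 := by
    rw [mul_comm n k]; exact sum_div_cast n hn0 k
  have hS1 : ∑ i ∈ Finset.range (n*k), c i = π * ((n:ℝ) - k) := by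
    simp only [hc]
    rw [Finset.sum_sub_distrib, ← Finset.mul_sum, ← Finset.mul_sum, hA, hB]
    field_simp
    ring
  have hS2 : ∑ i ∈ Finset.range (n*k), (c i)^2
      = 4*π^2 * ∑ i ∈ Finset.range (n*k),
          ((1 / (k : ℝ)) * (i / n : ℕ) - (1 / (n : ℝ)) * (i / k : ℕ)) ^ 2 := by
    rw [Finset.mul_sum]
    refine Finset.sum_congr rfl fun i _ => ?_
    have : c i = -(2*π) * ((1 / (k : ℝ)) * (i / n : ℕ) - (1 / (n : ℝ)) * (i / k : ℕ)) := by
      simp only [hc]; field_simp; ring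
    rw [this]; ring
  have hT : ∑ i ∈ Finset.range (n*k+1),
        ((1 / (k : ℝ)) * (i / n : ℕ) - (1 / (n : ℝ)) * (i / k : ℕ)) ^ 2
      = ∑ i ∈ Finset.range (n*k),
        ((1 / (k : ℝ)) * (i / n : ℕ) - (1 / (n : ℝ)) * (i / k : ℕ)) ^ 2 := by
    rw [Finset.sum_range_succ]
    have e1 : (n*k)/n = k := Nat.mul_div_cancel_left k hn0
    have e2 : (n*k)/k = n := Nat.mul_div_cancel _ hk0
    rw [e1, e2]
    field_simp
    simp only [sub_self, ne_eq, OfNat.ofNat_ne_zero, not_false_eq_true, zero_pow, add_zero]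
    exact Finset.sum_congr rfl fun x _ => by ring
  rw [I1, I2, hS1, hS2, hT, hNcast]
  set S := ∑ i ∈ Finset.range (n*k),
      ((1 / (k : ℝ)) * (i / n : ℕ) - (1 / (n : ℝ)) * (i / k : ℕ)) ^ 2
  field_simp
  ring
end

section
/- Let n ≥ 2 and a ≥ 2 be integers, and let f_m(s) = (2π/m)⌊ms⌋ on [0,1). Then ∫₀¹ (f_{an}(s) − f_n(s))² ds = 2π²(a−1)(2a−1)/(3a²n²). -/
open MeasureTheory Real

lemma sum_sq_real (a : ℕ) :
    ∑ j ∈ Finset.range a, (j:ℝ)^2 = a*(a-1)*(2*a-1)/6 := by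
  induction a with
  | zero => simp
  | succ a ih =>
    rw [Finset.sum_range_succ, ih]
    push_cast
    ring

lemma sum_mod_sq (a n : ℕ) :
    ∑ i ∈ Finset.range (a*n), ((i % a : ℕ):ℝ)^2
      = n * ∑ j ∈ Finset.range a, (j:ℝ)^2 := by
  induction n with
  | zero => simp
  | succ n ih =>
    rw [Nat.mul_succ, Finset.sum_range_add, ih]
    have h : ∀ i ∈ Finset.range a, (((a*n + i) % a : ℕ):ℝ)^2 = ((i:ℕ):ℝ)^2 := by
      intro i hi
      rw [Nat.add_comm, Nat.add_mul_mod_self_left, Nat.mod_eq_of_lt (Finset.mem_range.mp hi)]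
    rw [Finset.sum_congr rfl h]
    push_cast
    ring

lemma turnFun_eq_on (a n i : ℕ) (ha : 0 < a) (hn : 0 < n) (hi : i < a*n) :
    ∀ s ∈ Set.Ioo ((i:ℝ)/((a*n:ℕ):ℝ)) (((i:ℝ)+1)/((a*n:ℕ):ℝ)),
      turnFun (a*n) s - turnFun n s = (2*π/((a*n:ℕ):ℝ)) * ((i % a : ℕ):ℝ) := by
  intro s hs
  have hcast : ((a*n : ℕ):ℝ) = (a:ℝ)*(n:ℝ) := by push_cast; ring
  have hN : (0:ℝ) < ((a*n : ℕ):ℝ) := by positivity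
  have hNs1 : (i:ℝ) < ((a*n : ℕ):ℝ) * s := by
    have := (div_lt_iff₀ hN).mp hs.1
    linarith
  have hNs2 : ((a*n : ℕ):ℝ) * s < (i:ℝ) + 1 := by
    have := (lt_div_iff₀ hN).mp hs.2
    linarith
  have hfloor1 : ⌊((a*n : ℕ):ℝ) * s⌋ = (i:ℤ) := by
    rw [Int.floor_eq_iff]
    constructor
    · exact_mod_cast le_of_lt hNs1
    · exact_mod_cast hNs2
  have ha' : (0:ℝ) < (a:ℝ) := by positivity
  have hns : (n:ℝ) * s = ((a*n : ℕ):ℝ) * s / a := by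
    rw [hcast]; field_simp
  have hq : ((a * (i/a) : ℕ) : ℝ) ≤ (i:ℝ) := by exact_mod_cast Nat.mul_div_le i a
  have hq' : (a:ℝ) * ((i/a : ℕ):ℝ) ≤ (i:ℝ) := by push_cast at hq; linarith
  have hfloor2 : ⌊(n:ℝ) * s⌋ = ((i / a : ℕ) : ℤ) := by
    rw [Int.floor_eq_iff]
    constructor
    · rw [hns, le_div_iff₀ ha', Int.cast_natCast]
      nlinarith [hq', hNs1]
    · rw [hns, div_lt_iff₀ ha']
      have h2 : i + 1 ≤ a * (i/a) + a := by
        have := Nat.mod_lt i ha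
        have hdm := Nat.div_add_mod i a
        omega
      have h2' : ((i:ℝ) + 1) ≤ (a:ℝ) * ((i/a : ℕ):ℝ) + a := by exact_mod_cast h2
      rw [Int.cast_natCast]
      nlinarith [h2', hNs2]
  unfold turnFun
  rw [hfloor1, hfloor2, Int.cast_natCast, Int.cast_natCast]
  have hmod : ((i % a : ℕ) : ℝ) = (i:ℝ) - (a:ℝ) * ((i/a : ℕ):ℝ) := by
    have : (a : ℝ) * ((i/a : ℕ):ℝ) + ((i % a : ℕ):ℝ) = (i:ℝ) := by
      exact_mod_cast Nat.div_add_mod i a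
    linarith
  rw [hmod, hcast]
  have hn' : (0:ℝ) < (n:ℝ) := by positivity
  field_simp

theorem integral_sq_turnFun_an_sub_n (n a : ℕ) (hn : 2 ≤ n) (ha : 2 ≤ a) :
    ∫ s in (0:ℝ)..1, (turnFun (a * n) s - turnFun n s) ^ 2
      = 2 * π ^ 2 * (a - 1) * (2 * a - 1) / (3 * (a : ℝ) ^ 2 * (n : ℝ) ^ 2) := by
  have ha0 : 0 < a := by omega
  have hn0 : 0 < n := by omega
  set N := a * n with hNdef
  have hN0 : 0 < N := Nat.mul_pos ha0 hn0
  have hN : (0:ℝ) < (N:ℝ) := by exact_mod_cast hN0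
  set g : ℝ → ℝ := fun s => (turnFun N s - turnFun n s)^2 with hg
  have hae : ∀ i < N, g =ᵐ[volume.restrict (Set.uIoc ((i:ℝ)/N) (((i:ℝ)+1)/N))]
      (fun _ => ((2*π/N) * ((i % a : ℕ):ℝ))^2) := by
    intro i hi
    have hle : (i:ℝ)/N ≤ ((i:ℝ)+1)/N := by
      apply (div_le_div_iff_of_pos_right hN).mpr; linarith
    rw [Set.uIoc_of_le hle, Filter.EventuallyEq, ae_restrict_iff' measurableSet_Ioc]
    have hnull : (volume : Measure ℝ) {((i:ℝ)+1)/N} = 0 := measure_singleton _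
    filter_upwards [measure_eq_zero_iff_ae_notMem.mp hnull] with x hx hxm
    have hxIoo : x ∈ Set.Ioo ((i:ℝ)/N) (((i:ℝ)+1)/N) := by
      rcases lt_or_eq_of_le hxm.2 with h | h
      · exact ⟨hxm.1, h⟩
      · exact absurd h hx
    have := turnFun_eq_on a n i ha0 hn0 hi x hxIoo
    simp only [hg]
    rw [this]
  have hint : ∀ i < N, IntervalIntegrable g volume ((i:ℝ)/N) (((i:ℝ)+1)/N) := by
    intro i hi
    exact (intervalIntegrable_const).congr_ae ((hae i hi).symm)
  have hkey : ∀ i < N, ∫ s in ((i:ℝ)/N)..(((i:ℝ)+1)/N), g s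
      = ((2*π/N) * ((i % a : ℕ):ℝ))^2 * (1/N) := by
    intro i hi
    rw [intervalIntegral.integral_congr_ae (g := fun _ => ((2*π/N) * ((i % a : ℕ):ℝ))^2)
      (ae_imp_of_ae_restrict (hae i hi))]
    rw [intervalIntegral.integral_const, smul_eq_mul]
    have hd : ((i:ℝ)+1)/N - (i:ℝ)/N = 1/N := by field_simp; ring
    rw [hd]
    ring
  have hints : ∀ i < N, IntervalIntegrable g volume (((i:ℕ):ℝ)/N) (((i+1:ℕ):ℝ)/N) := by
    intro i hi
    push_cast
    exact hint i hi
  have hadj : ∫ s in (((0:ℕ):ℝ)/N)..(((N:ℕ):ℝ)/N), g s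
      = ∑ i ∈ Finset.range N, ∫ s in ((i:ℝ)/N)..(((i:ℝ)+1)/N), g s := by
    rw [← intervalIntegral.sum_integral_adjacent_intervals
      (a := fun k : ℕ => ((k:ℕ):ℝ)/N) (μ := volume) hints]
    apply Finset.sum_congr rfl
    intro i _
    push_cast
    rfl
  have h0 : (((0:ℕ):ℝ)/N) = (0:ℝ) := by norm_num
  have h1 : (((N:ℕ):ℝ)/N) = (1:ℝ) := div_self hN.ne'
  rw [← h0, ← h1, hadj,
    Finset.sum_congr rfl (fun i hi => hkey i (Finset.mem_range.mp hi))]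
  have hsum : ∑ i ∈ Finset.range N, ((2*π/N) * ((i % a : ℕ):ℝ))^2 * (1/N)
      = (2*π/N)^2 * (1/N) * ∑ i ∈ Finset.range N, ((i % a : ℕ):ℝ)^2 := by
    rw [Finset.mul_sum]
    apply Finset.sum_congr rfl
    intro i _
    ring
  rw [hsum, hNdef, sum_mod_sq, sum_sq_real]
  have ha' : (0:ℝ) < (a:ℝ) := by exact_mod_cast ha0
  have hn' : (0:ℝ) < (n:ℝ) := by exact_mod_cast hn0
  have hpush : ((a*n : ℕ):ℝ) = (a:ℝ)*(n:ℝ) := by push_cast; ring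
  rw [show ((N:ℕ):ℝ) = (a:ℝ)*(n:ℝ) from hpush]
  field_simp
  ring
end

section
/- For every integer n ≥ 2, the normalized squared turning distance between the regular n-gon and the regular (n+1)-gon equals D₂(R_n, R_{n+1}) = (2n² + 2n − 1)/(3 n² (n+1)²), where D₂(R_n,R_{n+1}) = (1/π²)(∫₀¹ (f_n − f_{n+1})² ds − (∫₀¹ (f_n − f_{n+1}) ds)²). -/
open MeasureTheory Real

/-! ### Auxiliary floor lemma -/

lemma floor_eq_div (p k : ℕ) (hp : 0 < p) (x : ℝ) (h1 : (k:ℝ)/p ≤ x) (h2 : x < ((k:ℝ)+1)/p) :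
    ⌊x⌋ = (k / p : ℕ) := by
  have hp' : (0:ℝ) < p := by exact_mod_cast hp
  rw [Int.floor_eq_iff]
  constructor
  · refine le_trans ?_ h1
    rw [le_div_iff₀ hp']
    exact_mod_cast Nat.div_mul_le_self k p
  · refine lt_of_lt_of_le h2 ?_
    rw [div_le_iff₀ hp']
    have hk : k + 1 ≤ (k/p + 1) * p := by
      calc k + 1 ≤ p*(k/p) + k%p + 1 := by rw [Nat.div_add_mod]
        _ ≤ p*(k/p) + p := by have := Nat.mod_lt k hp; omega
        _ = (k/p+1)*p := by ring
    exact_mod_cast hk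

/-! ### Integrals of functions constant on subintervals -/

lemma aeeq_const {a b c : ℝ} {h : ℝ → ℝ}
    (he : ∀ x ∈ Set.Ico a b, h x = c) :
    h =ᵐ[volume.restrict (Set.Ioc a b)] fun _ => c := by
  have hb : ∀ᵐ x : ℝ, x ≠ b := by
    have : {x : ℝ | ¬ x ≠ b} = {b} := by ext y; simp
    rw [ae_iff, this]; exact measure_singleton b
  rw [Filter.EventuallyEq, ae_restrict_iff' measurableSet_Ioc]
  filter_upwards [hb] with x hx hmem
  exact he x ⟨hmem.1.le, lt_of_le_of_ne hmem.2 hx⟩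

lemma intInt_const {a b c : ℝ} (hab : a ≤ b) {h : ℝ → ℝ}
    (he : ∀ x ∈ Set.Ico a b, h x = c) : IntervalIntegrable h volume a b := by
  rw [intervalIntegrable_iff_integrableOn_Ioc_of_le hab]
  exact (integrableOn_const (C := c) measure_Ioc_lt_top.ne enorm_ne_top).congr (aeeq_const he).symm

lemma integral_const_on {a b c : ℝ} (hab : a ≤ b) {h : ℝ → ℝ}
    (he : ∀ x ∈ Set.Ico a b, h x = c) : ∫ x in a..b, h x = (b - a) * c := by
  rw [intervalIntegral.integral_of_le hab, MeasureTheory.integral_congr_ae (aeeq_const he),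
    MeasureTheory.setIntegral_const, Real.volume_real_Ioc_of_le hab,
    smul_eq_mul]

lemma key_integral (N : ℕ) (hN : 0 < N) (h : ℝ → ℝ) (c : ℕ → ℝ)
    (hc : ∀ k < N, ∀ s ∈ Set.Ico ((k:ℝ)/N) (((k:ℝ)+1)/N), h s = c k) :
    ∫ s in (0:ℝ)..1, h s = (∑ k ∈ Finset.range N, c k) / N := by
  have hNR : (0:ℝ) < N := by exact_mod_cast hN
  have hle : ∀ k : ℕ, ((k:ℝ)/N) ≤ ((k:ℝ)+1)/N := fun k => by
    gcongr; linarith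
  set a : ℕ → ℝ := fun k => (k:ℝ)/N with ha
  have hcast : ∀ k : ℕ, a (k+1) = ((k:ℝ)+1)/N := fun k => by push_cast [ha]; ring
  have hint : ∀ k < N, IntervalIntegrable h volume (a k) (a (k+1)) := by
    intro k hk
    rw [hcast]
    exact intInt_const (hle k) (hc k hk)
  have hsum := intervalIntegral.sum_integral_adjacent_intervals hint
  have ha0 : a 0 = 0 := by simp [ha]
  have haN : a N = 1 := by simp [ha]; exact hN.ne'
  rw [ha0, haN] at hsum
  rw [← hsum]
  have hpiece : ∀ k ∈ Finset.range N, (∫ x in a k..a (k+1), h x) = c k / N := by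
    intro k hk
    rw [hcast, integral_const_on (hle k) (hc k (Finset.mem_range.1 hk))]
    field_simp
    ring
  rw [Finset.sum_congr rfl hpiece, Finset.sum_div]

/-! ### The step values and their sums -/

noncomputable def dd (n k : ℕ) : ℝ := ((k/(n+1) : ℕ):ℝ)/n - ((k/n : ℕ):ℝ)/(n+1)

lemma sum_range_mul {M : Type*} [AddCommMonoid M] (f : ℕ → M) (a b : ℕ) :
    ∑ k ∈ Finset.range (a*b), f k
      = ∑ p ∈ Finset.range a ×ˢ Finset.range b, f (p.1*b + p.2) := by
  rcases Nat.eq_zero_or_pos b with hb | hb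
  · subst hb; simp
  refine Finset.sum_nbij' (fun k => (k / b, k % b)) (fun p => p.1 * b + p.2) ?_ ?_ ?_ ?_ ?_
  · intro k hk
    rw [Finset.mem_range] at hk
    simp only [Finset.mem_product, Finset.mem_range]
    exact ⟨Nat.div_lt_of_lt_mul (by rw [Nat.mul_comm] at hk; exact hk), Nat.mod_lt _ hb⟩
  · intro p hp
    simp only [Finset.mem_product, Finset.mem_range] at hp
    rw [Finset.mem_range]
    calc p.1 * b + p.2 < p.1 * b + b := by omega
      _ = (p.1 + 1) * b := by ring
      _ ≤ a * b := Nat.mul_le_mul_right b hp.1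
  · intro k hk
    simp only
    exact Nat.div_add_mod' k b
  · intro p hp
    simp only [Finset.mem_product, Finset.mem_range] at hp
    have h1 : (p.1 * b + p.2) / b = p.1 := by
      rw [Nat.add_comm, Nat.add_mul_div_right _ _ hb, Nat.div_eq_of_lt hp.2]
      omega
    have h2 : (p.1 * b + p.2) % b = p.2 := by
      rw [Nat.add_comm, Nat.add_mul_mod_self_right, Nat.mod_eq_of_lt hp.2]
    simp [h1, h2]
  · intro k hk
    simp only
    rw [Nat.div_add_mod']

lemma dd_eval (n q r : ℕ) (hn : 0 < n) (hq : q < n) (hr : r < n+1) :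
    dd n (q*(n+1)+r)
      = if n ≤ q + r then (q:ℝ)/n - ((q:ℝ)+1)/(n+1) else (q:ℝ)/n - (q:ℝ)/(n+1) := by
  have e1 : (q*(n+1)+r)/(n+1) = q := by
    rw [Nat.add_comm, Nat.add_mul_div_right _ _ (Nat.succ_pos n), Nat.div_eq_of_lt hr]
    omega
  have e2 : (q*(n+1)+r)/n = q + (q+r)/n := by
    have : q*(n+1)+r = (q+r) + q*n := by ring
    rw [this, Nat.add_mul_div_right _ _ hn, Nat.add_comm]
  have e3 : (q+r)/n = if n ≤ q + r then 1 else 0 := by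
    split_ifs with h
    · exact Nat.div_eq_of_lt_le (by omega) (by omega)
    · exact Nat.div_eq_of_lt (by omega)
  rw [dd, e1, e2, e3]
  split_ifs with h <;> push_cast <;> ring

lemma sum_cast_id (m : ℕ) : ∑ i ∈ Finset.range m, (i:ℝ) = m*(m-1)/2 := by
  induction m with
  | zero => simp
  | succ k ih => rw [Finset.sum_range_succ, ih]; push_cast; ring

lemma sum_cast_sq (m : ℕ) : ∑ i ∈ Finset.range m, (i:ℝ)^2 = m*(m-1)*(2*m-1)/6 := by
  induction m with
  | zero => simp
  | succ k ih => rw [Finset.sum_range_succ, ih]; push_cast; ring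

lemma sum_ite_count (n q : ℕ) (hq : q < n) (X Y : ℝ) :
    ∑ r ∈ Finset.range (n+1), (if n ≤ q + r then X else Y)
      = ((q:ℝ)+1)*X + ((n:ℝ)-(q:ℝ))*Y := by
  have hge : (Finset.range (n+1)).filter (fun r => n ≤ q + r) = Finset.Ico (n-q) (n+1) := by
    ext r
    simp only [Finset.mem_filter, Finset.mem_range, Finset.mem_Ico]
    omega
  have hlt : (Finset.range (n+1)).filter (fun r => ¬ n ≤ q + r) = Finset.range (n-q) := by
    ext r
    simp only [Finset.mem_filter, Finset.mem_range]
    omega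
  rw [Finset.sum_ite, Finset.sum_const, Finset.sum_const, hge, hlt,
    Nat.card_Ico, Finset.card_range]
  have h1 : (n+1) - (n-q) = q+1 := by omega
  rw [h1, nsmul_eq_mul, nsmul_eq_mul, Nat.cast_sub hq.le]
  push_cast; ring

lemma sumS (n : ℕ) (hn : 0 < n) :
    ∑ k ∈ Finset.range (n*(n+1)), dd n k = -(1/2) := by
  have hn0 : (n:ℝ) ≠ 0 := Nat.cast_ne_zero.2 hn.ne'
  have hn1 : (n:ℝ) + 1 ≠ 0 := by positivity
  rw [sum_range_mul (dd n) n (n+1), Finset.sum_product]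
  have h1 : ∀ q ∈ Finset.range n,
      ∑ r ∈ Finset.range (n+1), dd n (q*(n+1)+r)
        = (1/((n:ℝ)*((n:ℝ)+1))) * q + (-(1/((n:ℝ)+1))) := by
    intro q hq
    have hq' := Finset.mem_range.1 hq
    rw [Finset.sum_congr rfl (fun r hr => dd_eval n q r hn hq' (Finset.mem_range.1 hr)),
      sum_ite_count n q hq']
    field_simp
    ring
  rw [Finset.sum_congr rfl h1, Finset.sum_add_distrib, ← Finset.mul_sum, sum_cast_id,
    Finset.sum_const, Finset.card_range, nsmul_eq_mul]
  field_simp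
  ring

lemma sumT (n : ℕ) (hn : 0 < n) :
    ∑ k ∈ Finset.range (n*(n+1)), (dd n k)^2
      = ((n:ℝ)^2 + n + 1)/(6*n*((n:ℝ)+1)) := by
  have hn0 : (n:ℝ) ≠ 0 := Nat.cast_ne_zero.2 hn.ne'
  have hn1 : (n:ℝ) + 1 ≠ 0 := by positivity
  rw [sum_range_mul (fun k => (dd n k)^2) n (n+1), Finset.sum_product]
  have h1 : ∀ q ∈ Finset.range n,
      ∑ r ∈ Finset.range (n+1), (dd n (q*(n+1)+r))^2
        = ((1-(n:ℝ))/((n:ℝ)^2*((n:ℝ)+1)^2)) * (q:ℝ)^2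
          + (((n:ℝ)^2-2*n)/((n:ℝ)^2*((n:ℝ)+1)^2)) * (q:ℝ)
          + ((n:ℝ)^2/((n:ℝ)^2*((n:ℝ)+1)^2)) := by
    intro q hq
    have hq' := Finset.mem_range.1 hq
    have h2 : ∀ r ∈ Finset.range (n+1), (dd n (q*(n+1)+r))^2
        = if n ≤ q + r then ((q:ℝ)/n - ((q:ℝ)+1)/(n+1))^2 else ((q:ℝ)/n - (q:ℝ)/(n+1))^2 := by
      intro r hr
      rw [dd_eval n q r hn hq' (Finset.mem_range.1 hr), apply_ite (fun x : ℝ => x^2)]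
    rw [Finset.sum_congr rfl h2, sum_ite_count n q hq']
    field_simp
    ring
  rw [Finset.sum_congr rfl h1, Finset.sum_add_distrib, Finset.sum_add_distrib,
    ← Finset.mul_sum, ← Finset.mul_sum, sum_cast_sq, sum_cast_id,
    Finset.sum_const, Finset.card_range, nsmul_eq_mul]
  field_simp
  ring

/-! ### Main theorem -/

theorem D2_n_succ (n : ℕ) (hn : 2 ≤ n) :
    (1 / π ^ 2) * ((∫ s in (0:ℝ)..1, (turnFun n s - turnFun (n + 1) s) ^ 2)
        - (∫ s in (0:ℝ)..1, (turnFun n s - turnFun (n + 1) s)) ^ 2)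
      = (2 * (n : ℝ) ^ 2 + 2 * n - 1) / (3 * (n : ℝ) ^ 2 * ((n : ℝ) + 1) ^ 2) := by
  have hn' : 0 < n := by omega
  have hn0 : (n:ℝ) ≠ 0 := Nat.cast_ne_zero.2 hn'.ne'
  have hnpos : (0:ℝ) < n := by positivity
  have hn1 : (n:ℝ) + 1 ≠ 0 := by positivity
  set N := n*(n+1) with hNdef
  have hN : 0 < N := by positivity
  have hNR : ((N:ℕ):ℝ) = (n:ℝ)*((n:ℝ)+1) := by rw [hNdef]; push_cast; ring
  have hNR0 : ((N:ℕ):ℝ) ≠ 0 := by rw [hNR]; positivity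
  have hblock : ∀ k < N, ∀ s ∈ Set.Ico ((k:ℝ)/N) (((k:ℝ)+1)/N),
      turnFun n s - turnFun (n+1) s = 2*π*(dd n k) := by
    intro k hk s hs
    obtain ⟨hs1, hs2⟩ := hs
    have f1 : ⌊(n:ℝ)*s⌋ = (k/(n+1) : ℕ) := by
      apply floor_eq_div (n+1) k (Nat.succ_pos n)
      · push_cast
        calc (k:ℝ)/((n:ℝ)+1) = (n:ℝ)*((k:ℝ)/(N:ℝ)) := by rw [hNR]; field_simp
          _ ≤ (n:ℝ)*s := mul_le_mul_of_nonneg_left hs1 (by positivity)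
      · push_cast
        calc (n:ℝ)*s < (n:ℝ)*(((k:ℝ)+1)/(N:ℝ)) := mul_lt_mul_of_pos_left hs2 hnpos
          _ = ((k:ℝ)+1)/((n:ℝ)+1) := by rw [hNR]; field_simp
    have f2 : ⌊((n:ℝ)+1)*s⌋ = (k/n : ℕ) := by
      apply floor_eq_div n k hn'
      · calc (k:ℝ)/(n:ℝ) = ((n:ℝ)+1)*((k:ℝ)/(N:ℝ)) := by rw [hNR]; field_simp
          _ ≤ ((n:ℝ)+1)*s := mul_le_mul_of_nonneg_left hs1 (by positivity)
      · calc ((n:ℝ)+1)*s < ((n:ℝ)+1)*(((k:ℝ)+1)/(N:ℝ)) :=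
            mul_lt_mul_of_pos_left hs2 (by positivity)
          _ = ((k:ℝ)+1)/(n:ℝ) := by rw [hNR]; field_simp
    rw [turnFun, turnFun, dd]
    have c1 : ((n+1 : ℕ):ℝ) = (n:ℝ)+1 := by push_cast; ring
    rw [c1, f1, f2, Int.cast_natCast, Int.cast_natCast]
    ring
  have hblock2 : ∀ k < N, ∀ s ∈ Set.Ico ((k:ℝ)/N) (((k:ℝ)+1)/N),
      (turnFun n s - turnFun (n+1) s)^2 = (2*π*(dd n k))^2 := by
    intro k hk s hs
    rw [hblock k hk s hs]
  have hI1 := key_integral N hN (fun s => turnFun n s - turnFun (n+1) s)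
    (fun k => 2*π*dd n k) hblock
  have hI2 := key_integral N hN (fun s => (turnFun n s - turnFun (n+1) s)^2)
    (fun k => (2*π*dd n k)^2) hblock2
  have hs1 : ∑ k ∈ Finset.range N, 2*π*dd n k = 2*π*(-(1/2)) := by
    rw [← Finset.mul_sum, hNdef, sumS n hn']
  have hs2 : ∑ k ∈ Finset.range N, (2*π*dd n k)^2
      = 4*π^2*(((n:ℝ)^2 + n + 1)/(6*n*((n:ℝ)+1))) := by
    have h4 : ∀ k ∈ Finset.range N, (2*π*dd n k)^2 = 4*π^2*(dd n k)^2 := by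
      intro k _; ring
    rw [Finset.sum_congr rfl h4, ← Finset.mul_sum, hNdef, sumT n hn']
  rw [hI1, hI2, hs1, hs2, hNR]
  have hpi : π ≠ 0 := Real.pi_ne_zero
  field_simp
  ring
end

section
/- For every integer n ≥ 2, ∫₀¹ (2πs − f_n(s))² ds − (∫₀¹ (2πs − f_n(s)) ds)² = π²/(3n²); equivalently, the 2-turning distance between the circle and the regular n-gon is d₂(C, R_n) = √3 π/(3n). -/
open MeasureTheory Real

lemma fractPow_intervalIntegrable (p : ℕ) (a b : ℝ) :
    IntervalIntegrable (fun x : ℝ => Int.fract x ^ p) volume a b := by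
  apply IntervalIntegrable.mono_fun' (g := fun _ => (1:ℝ)) intervalIntegrable_const
  · exact ((measurable_fract.pow_const p).aestronglyMeasurable).restrict
  · filter_upwards with x
    rw [Real.norm_eq_abs, abs_pow, abs_of_nonneg (Int.fract_nonneg x)]
    exact pow_le_one₀ (Int.fract_nonneg x) (le_of_lt (Int.fract_lt_one x))

lemma fract_pow_periodic (p : ℕ) :
    Function.Periodic (fun x : ℝ => Int.fract x ^ p) 1 := fun x => by
  simp [Int.fract_periodic ℝ x]

lemma fract_pow_integral (p : ℕ) :
    ∫ x in (0:ℝ)..1, Int.fract x ^ p = 1 / (p + 1) := by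
  have h1 : ∀ᵐ x : ℝ, x ∈ Set.uIoc (0:ℝ) 1 → Int.fract x ^ p = x ^ p := by
    have hne : ∀ᵐ x : ℝ, x ≠ 1 := by
      rw [MeasureTheory.ae_iff]
      simpa using measure_singleton (1:ℝ)
    filter_upwards [hne] with x hx hmem
    rw [Set.uIoc_of_le (by norm_num : (0:ℝ) ≤ 1)] at hmem
    rw [Int.fract_eq_self.2 ⟨le_of_lt hmem.1, lt_of_le_of_ne hmem.2 hx⟩]
  rw [intervalIntegral.integral_congr_ae h1, integral_pow]
  norm_num

lemma fract_scaled_integral (p : ℕ) (n : ℕ) (hn : n ≠ 0) :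
    ∫ s in (0:ℝ)..1, Int.fract ((n:ℝ) * s) ^ p = 1 / (p + 1) := by
  have hn' : (n:ℝ) ≠ 0 := Nat.cast_ne_zero.2 hn
  rw [intervalIntegral.integral_comp_mul_left (fun x => Int.fract x ^ p) hn']
  have hper := fract_pow_periodic p
  have hzs := hper.intervalIntegral_add_zsmul_eq (n : ℤ) 0
    (fun t₁ t₂ => fractPow_intervalIntegrable p t₁ t₂)
  simp only [zero_add, smul_eq_mul, zsmul_eq_mul, Int.cast_natCast, mul_one] at hzs
  rw [mul_zero, mul_one, hzs, fract_pow_integral p, smul_eq_mul]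
  field_simp

theorem d2_circle_regular (n : ℕ) (hn : 2 ≤ n) :
    (∫ s in (0:ℝ)..1, (2 * π * s - turnFun n s) ^ 2)
        - (∫ s in (0:ℝ)..1, (2 * π * s - turnFun n s)) ^ 2
      = π ^ 2 / (3 * (n : ℝ) ^ 2) ∧
    Real.sqrt ((∫ s in (0:ℝ)..1, (2 * π * s - turnFun n s) ^ 2)
        - (∫ s in (0:ℝ)..1, (2 * π * s - turnFun n s)) ^ 2)
      = Real.sqrt 3 * π / (3 * n) := by
  have hn0 : n ≠ 0 := by omega
  have hn' : (n:ℝ) ≠ 0 := Nat.cast_ne_zero.2 hn0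
  have key : ∀ s : ℝ, 2 * π * s - turnFun n s = (2 * π / n) * Int.fract ((n:ℝ) * s) := by
    intro s
    have hf : Int.fract ((n:ℝ) * s) = (n:ℝ) * s - (⌊(n:ℝ) * s⌋ : ℝ) :=
      (Int.self_sub_floor ((n:ℝ) * s)).symm
    have h2 : (2 * π / (n:ℝ)) * ((n:ℝ) * s) = 2 * π * s := by
      field_simp
    rw [turnFun, hf, mul_sub, h2]
  have h1 : (∫ s in (0:ℝ)..1, (2 * π * s - turnFun n s)) = π / n := by
    simp_rw [key]
    rw [intervalIntegral.integral_const_mul]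
    have := fract_scaled_integral 1 n hn0
    simp only [pow_one] at this
    rw [this]
    push_cast
    ring
  have h2 : (∫ s in (0:ℝ)..1, (2 * π * s - turnFun n s) ^ 2)
      = 4 * π ^ 2 / (3 * (n:ℝ) ^ 2) := by
    simp_rw [key, mul_pow]
    rw [intervalIntegral.integral_const_mul, fract_scaled_integral 2 n hn0]
    push_cast
    field_simp
    ring
  have hmain : (∫ s in (0:ℝ)..1, (2 * π * s - turnFun n s) ^ 2)
        - (∫ s in (0:ℝ)..1, (2 * π * s - turnFun n s)) ^ 2
      = π ^ 2 / (3 * (n : ℝ) ^ 2) := by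
    rw [h1, h2]
    field_simp
    ring
  refine ⟨hmain, ?_⟩
  rw [hmain]
  rw [show π ^ 2 / (3 * (n:ℝ) ^ 2) = (Real.sqrt 3 * π / (3 * n)) ^ 2 by
    rw [div_pow, mul_pow, Real.sq_sqrt (by norm_num : (3:ℝ) ≥ 0)]
    field_simp]
  exact Real.sqrt_sq (by positivity)
end

section
/- Let n, k ≥ 2 and let f_n, f_k be the turning functions of the regular n- and k-gons, extended to ℝ by f_m(s+1) = f_m(s) + 2π. Then for any integers 0 ≤ l < n and 0 ≤ m < k and any p ≥ 1, inf_{θ∈ℝ} ∫₀¹ |f_n(s + m/k + l/n) − f_k(s) + θ|^p ds = inf_{θ∈ℝ} ∫₀¹ |f_n(s) − f_k(s) + θ|^p ds. Hence the p-turning distance between two regular polygons requires no optimization over horizontal shifts among critical events. -/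
open MeasureTheory Real

lemma turnFun_add_nat_div (m : ℕ) (hm : m ≠ 0) (s : ℝ) (j : ℕ) :
    turnFun m (s + (j : ℝ) / m) = turnFun m s + 2 * π / m * j := by
  have hm' : (m : ℝ) ≠ 0 := Nat.cast_ne_zero.mpr hm
  unfold turnFun
  have : (m : ℝ) * (s + (j : ℝ) / m) = (m : ℝ) * s + (j : ℤ) := by
    field_simp; norm_cast
  rw [this, Int.floor_add_intCast]
  push_cast
  ring

lemma turnFun_add_one (m : ℕ) (hm : m ≠ 0) (s : ℝ) :
    turnFun m (s + 1) = turnFun m s + 2 * π := by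
  have hm' : (m : ℝ) ≠ 0 := Nat.cast_ne_zero.mpr hm
  have := turnFun_add_nat_div m hm s m
  rw [div_self hm'] at this
  rw [this, mul_comm (2 * π / m) (m:ℝ)]
  field_simp

theorem no_critical_event_optimization (n k : ℕ) (hn : 2 ≤ n) (hk : 2 ≤ k)
    (l m : ℕ) (hl : l < n) (hm : m < k) (p : ℝ) (hp : 1 ≤ p) :
    (⨅ θ : ℝ, ∫ s in (0:ℝ)..1,
        |turnFun n (s + (m : ℝ) / k + (l : ℝ) / n) - turnFun k s + θ| ^ p)
      = ⨅ θ : ℝ, ∫ s in (0:ℝ)..1, |turnFun n s - turnFun k s + θ| ^ p := by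
  have hn0 : n ≠ 0 := by omega
  have hk0 : k ≠ 0 := by omega
  set c : ℝ := 2 * π / n * l + 2 * π / k * m with hc
  set h : ℝ → ℝ := fun s => turnFun n s - turnFun k s with hh
  have hper : ∀ θ : ℝ, Function.Periodic (fun s => |h s + θ| ^ p) 1 := by
    intro θ s
    simp only [hh, turnFun_add_one n hn0, turnFun_add_one k hk0]
    ring_nf
  -- step 1: for each θ, LHS integral = ∫ |h s + (θ + c)|^p
  have key : ∀ θ : ℝ,
      (∫ s in (0:ℝ)..1,
        |turnFun n (s + (m : ℝ) / k + (l : ℝ) / n) - turnFun k s + θ| ^ p)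
      = ∫ s in (0:ℝ)..1, |h s + (θ + c)| ^ p := by
    intro θ
    have e1 : ∀ s : ℝ,
        |turnFun n (s + (m : ℝ) / k + (l : ℝ) / n) - turnFun k s + θ| ^ p
          = |h (s + (m : ℝ) / k) + (θ + c)| ^ p := by
      intro s
      have h1 : turnFun n (s + (m : ℝ) / k + (l : ℝ) / n)
          = turnFun n (s + (m : ℝ) / k) + 2 * π / n * l :=
        turnFun_add_nat_div n hn0 _ l
      have h2 : turnFun k (s + (m : ℝ) / k) = turnFun k s + 2 * π / k * m :=
        turnFun_add_nat_div k hk0 s m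
      simp only [hh, h1, hc]
      rw [show turnFun k s = turnFun k (s + (m : ℝ) / k) - 2 * π / k * m by
        rw [h2]; ring]
      ring_nf
    simp only [e1]
    -- change of variables and periodicity
    rw [intervalIntegral.integral_comp_add_right (fun s => |h s + (θ + c)| ^ p)]
    rw [show (0:ℝ) + (m:ℝ)/k = (m:ℝ)/k by ring, show (1:ℝ) + (m:ℝ)/k = (m:ℝ)/k + 1 by ring]
    have := (hper (θ + c)).intervalIntegral_add_eq ((m : ℝ) / k) 0
    simpa using this
  have key2 : ∀ θ : ℝ, (∫ s in (0:ℝ)..1, |turnFun n s - turnFun k s + θ| ^ p)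
      = ∫ s in (0:ℝ)..1, |h s + θ| ^ p := fun θ => rfl
  simp only [key, key2]
  exact Function.Surjective.iInf_comp (fun θ => ⟨θ - c, by ring⟩)
    (fun θ => ∫ s in (0:ℝ)..1, |h s + θ| ^ p)
end
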